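/- arXiv:1004.2265 — 2 statements merged into one kernel-verified Lean document; each statement's English description precedes it below -/
import Mathlib

section
/- The backward octagon additive continued fraction expansion determines a unique point: if v, v' ∈ (1+√2, ∞) and s : ℕ → {1,…,7} are such that for every k ≥ 0 both (F⁻)ᵏ(v) and (F⁻)ᵏ(v') lie in the interior of γ[Σ_{s(k)}], then v = v'. -/
open MeasureTheory Set

noncomputable section

/-- The linear fractional transformation of `ℝ` induced by a 2×2 real matrix,
with the convention that the value is `0` when the denominator vanishes. -/
def mob (M : Matrix (Fin 2) (Fin 2) ℝ) (u : ℝ) : ℝ :=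
  (M 0 0 * u + M 0 1) / (M 1 0 * u + M 1 1)

/-- The matrix `γ = [[-1, 2+2√2],[0,1]]`. -/
def gam : Matrix (Fin 2) (Fin 2) ℝ := !![-1, 2 + 2 * Real.sqrt 2; 0, 1]

/-- The isometries `ν₁, …, ν₇` of the octagon. -/
def nu : ℕ → Matrix (Fin 2) (Fin 2) ℝ
  | 1 => (Real.sqrt 2)⁻¹ • !![1, 1; 1, -1]
  | 2 => (Real.sqrt 2)⁻¹ • !![1, 1; -1, 1]
  | 3 => !![0, 1; 1, 0]
  | 4 => !![0, 1; -1, 0]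
  | 5 => (Real.sqrt 2)⁻¹ • !![-1, 1; 1, 1]
  | 6 => (Real.sqrt 2)⁻¹ • !![-1, 1; -1, -1]
  | 7 => !![-1, 0; 0, 1]
  | _ => 1

/-- The index `i` of the sector `Σᵢ` (in inverse-slope coordinates) containing `u`:
`Σ₀ = (1+√2, ∞)`, `Σ₁ = (1, 1+√2]`, `Σ₂ = (√2-1, 1]`, `Σ₃ = (0, √2-1]`, `Σ₄ = (1-√2, 0]`,
`Σ₅ = (-1, 1-√2]`, `Σ₆ = (-1-√2, -1]`, `Σ₇ = (-∞, -1-√2]`. -/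
def sectorIndex (u : ℝ) : ℕ :=
  if 1 + Real.sqrt 2 < u then 0
  else if 1 < u then 1
  else if Real.sqrt 2 - 1 < u then 2
  else if 0 < u then 3
  else if 1 - Real.sqrt 2 < u then 4
  else if -1 < u then 5
  else if -(1 + Real.sqrt 2) < u then 6
  else 7

/-- The octagon Farey map in inverse-slope coordinates: `F(u) = (γ·νᵢ)[u]` for `u ∈ Σᵢ`
(`i = 1,…,7`), and `F(u) = u` for `u ∈ Σ₀`. -/
def F (u : ℝ) : ℝ :=
  if sectorIndex u = 0 then u else mob (gam * nu (sectorIndex u)) u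

/-- The sectors `Σ₀, Σ₁, …, Σ₇` in inverse-slope coordinates. -/
def Sec : ℕ → Set ℝ
  | 0 => Set.Ioi (1 + Real.sqrt 2)
  | 1 => Set.Ioc 1 (1 + Real.sqrt 2)
  | 2 => Set.Ioc (Real.sqrt 2 - 1) 1
  | 3 => Set.Ioc 0 (Real.sqrt 2 - 1)
  | 4 => Set.Ioc (1 - Real.sqrt 2) 0
  | 5 => Set.Ioc (-1) (1 - Real.sqrt 2)
  | 6 => Set.Ioc (-(1 + Real.sqrt 2)) (-1)
  | 7 => Set.Iic (-(1 + Real.sqrt 2))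
  | _ => ∅

/-- The backward map `F⁻`: since `γ` is an involution, `v ∈ γ[Σⱼ]` iff `γ[v] ∈ Σⱼ`, and
then `F⁻(v) = (νⱼ·γ)[v]`; for `v ∉ Σ₀` we set `F⁻(v) = v`. -/
def Fm (v : ℝ) : ℝ :=
  if v ≤ 1 + Real.sqrt 2 then v
  else mob (nu (sectorIndex (mob gam v)) * gam) v

/-!
Write `d k = |(F⁻)ᵏ v - (F⁻)ᵏ v'|`. On `γ[Σⱼ]` the map `F⁻` is the Möbius map of `νⱼ γ`,
whose determinant is `±1` and whose denominator takes values in `(0, 1]` there; hence `d` is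
nondecreasing. On `γ[Σ₇]` the map `F⁻` is the translation by `-(2 + 2√2)`, so no orbit stays
there forever, while the other six intervals are open of length at most `√2`; hence `d < √2`.
On the other hand `d` keeps doubling: in one step on the branches `2, …, 5`, where the
denominator is at most `1 / √2`, and likewise on branch `6` when the next branch is `6` or `7`.
Branch `1` has the parabolic fixed point `1 + √2` and is a translation in the coordinate
`1 / (x - (1 + √2))`, so a run through it ends; by the end of the run, or one step later,
`d` has at least doubled.
A bounded sequence that keeps doubling vanishes, so `d 0 = |v - v'| = 0`.
-/

open Filter

lemma sqrt_two_bounds : 1.41 < √2 ∧ √2 < 1.42 := by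
  have h := Real.mul_self_sqrt (show (0:ℝ) ≤ 2 by norm_num)
  constructor <;> nlinarith [Real.sqrt_nonneg 2]

lemma inv_sqrt_two_eq_sqrt_two_div_two : (√2)⁻¹ = √2 / 2 := by
  field_simp
  simp only [Nat.ofNat_nonneg, Real.sq_sqrt]

lemma two_mul_mul_le_one_of_le_inv_sqrt_two {a b : ℝ} (ha : 0 ≤ a) (ha' : a ≤ (√2)⁻¹)
    (hb' : b ≤ (√2)⁻¹) :
    2 * (a * b) ≤ 1 := by
  have h : (√2)⁻¹ * (√2)⁻¹ = 2⁻¹ := by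
    rw [← mul_inv, Real.mul_self_sqrt zero_le_two]
  have hab : a * b ≤ (√2)⁻¹ * (√2)⁻¹ :=
    (mul_le_mul_of_nonneg_left hb' ha).trans
      (mul_le_mul_of_nonneg_right ha' (inv_nonneg.2 (Real.sqrt_nonneg 2)))
  linarith

lemma exists_sub_nat_mul_lt (a L : ℝ) {c : ℝ} (hc : 0 < c) : ∃ n : ℕ, a - n * c < L := by
  obtain ⟨n, hn⟩ := exists_nat_gt ((a - L) / c)
  exact ⟨n, by rw [div_lt_iff₀ hc] at hn; linarith⟩

lemma nonpos_of_forall_exists_two_mul_le {d : ℕ → ℝ} {B : ℝ} (hB : ∀ k, d k ≤ B)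
    (h : ∀ k, ∃ m, 2 * d k ≤ d m) (k : ℕ) : d k ≤ 0 := by
  have hpow : ∀ n : ℕ, ∀ k, 2 ^ n * d k ≤ B := by
    intro n
    induction n with
    | zero => simpa using hB
    | succ n ih =>
      intro k
      obtain ⟨m, hm⟩ := h k
      calc 2 ^ (n + 1) * d k = 2 ^ n * (2 * d k) := by ring
        _ ≤ 2 ^ n * d m := by gcongr
        _ ≤ B := ih m
  by_contra! hk
  obtain ⟨n, hn⟩ := pow_unbounded_of_one_lt (B / d k) one_lt_two
  rw [div_lt_iff₀ hk] at hn
  linarith [hpow n k]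

lemma abs_sub_eq_abs_inv_sub_inv_mul {a b : ℝ} (ha : 0 < a) (hb : 0 < b) :
    |a - b| = |a⁻¹ - b⁻¹| * (a * b) := by
  rw [inv_sub_inv ha.ne' hb.ne', abs_div, abs_of_pos (mul_pos ha hb),
    div_mul_cancel₀ _ (mul_pos ha hb).ne', abs_sub_comm]

def mobDenom (M : Matrix (Fin 2) (Fin 2) ℝ) (u : ℝ) : ℝ := M 1 0 * u + M 1 1

lemma mob_sub_mob (M : Matrix (Fin 2) (Fin 2) ℝ) {u w : ℝ} (hu : mobDenom M u ≠ 0)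
    (hw : mobDenom M w ≠ 0) :
    mob M u - mob M w = M.det * (u - w) / (mobDenom M u * mobDenom M w) := by
  unfold mobDenom at hu hw
  rw [Matrix.det_fin_two, mob, mob, mobDenom, mobDenom, div_sub_div _ _ hu hw]
  ring

lemma mul_abs_sub_le_abs_mob_sub_mob {M : Matrix (Fin 2) (Fin 2) ℝ} {u w C : ℝ}
    (hdet : |M.det| = 1) (hu : mobDenom M u ≠ 0) (hw : mobDenom M w ≠ 0)
    (h : C * (|mobDenom M u| * |mobDenom M w|) ≤ 1) :
    C * |u - w| ≤ |mob M u - mob M w| := by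
  rw [mob_sub_mob M hu hw, abs_div, abs_mul, abs_mul, hdet, one_mul,
    le_div_iff₀ (by positivity)]
  calc C * |u - w| * (|mobDenom M u| * |mobDenom M w|)
      = |u - w| * (C * (|mobDenom M u| * |mobDenom M w|)) := by ring
    _ ≤ |u - w| := mul_le_of_le_one_right (abs_nonneg _) h

lemma mob_gam (x : ℝ) : mob gam x = 2 + 2 * √2 - x := by
  simp only [mob, gam, Matrix.of_apply, Matrix.cons_val_zero, Matrix.cons_val_one]
  ring

lemma mob_mul_gam (M : Matrix (Fin 2) (Fin 2) ℝ) (x : ℝ) :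
    mob (M * gam) x = mob M (2 + 2 * √2 - x) := by
  simp only [mob, gam, Matrix.mul_apply, Fin.sum_univ_two, Matrix.of_apply, Matrix.cons_val_zero,
    Matrix.cons_val_one]
  ring_nf

lemma mem_interior_image_mob_gam {S : Set ℝ} {x : ℝ} :
    x ∈ interior (mob gam '' S) ↔ 2 + 2 * √2 - x ∈ interior S := by
  have : mob gam '' S = Homeomorph.subLeft (2 + 2 * √2) '' S := by
    ext; simp [mob_gam]
  rw [this, ← Homeomorph.image_interior, Homeomorph.image_eq_preimage_symm]
  simp [sub_eq_neg_add]

lemma abs_det_nu {j : ℕ} (hj : j ∈ Icc 1 7) : |(nu j).det| = 1 := by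
  have h2 := Real.mul_self_sqrt (show (0:ℝ) ≤ 2 by norm_num)
  obtain ⟨hj1, hj7⟩ := hj
  interval_cases j <;>
    simp only [nu, Matrix.det_fin_two, Matrix.smul_apply, Matrix.of_apply, Matrix.cons_val_zero,
      Matrix.cons_val_one, smul_eq_mul] <;>
    field_simp <;> norm_num [h2]

lemma sectorIndex_eq_of_mem_Sec {j : ℕ} (hj : j ∈ Icc 1 7) {u : ℝ} (hu : u ∈ Sec j) :
    sectorIndex u = j := by
  have := sqrt_two_bounds
  obtain ⟨hj1, hj7⟩ := hj
  interval_cases j <;> simp only [Sec, mem_Ioc, mem_Iic] at hu <;> unfold sectorIndex <;>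
    split_ifs <;> first | rfl | (exfalso; linarith)

lemma Sec_subset_Iic {j : ℕ} (hj : j ∈ Icc 1 7) : Sec j ⊆ Iic (1 + √2) := by
  have := sqrt_two_bounds
  obtain ⟨hj1, hj7⟩ := hj
  intro u hu
  interval_cases j <;> simp only [Sec, mem_Ioc, mem_Iic] at hu ⊢ <;> linarith

lemma mobDenom_nu_mem_Ioc {j : ℕ} (hj : j ∈ Icc 1 7) {u : ℝ} (hu : u ∈ interior (Sec j)) :
    mobDenom (nu j) u ∈ Ioc 0 1 := by
  have := sqrt_two_bounds
  have h2 := Real.mul_self_sqrt (show (0:ℝ) ≤ 2 by norm_num)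
  obtain ⟨hj1, hj7⟩ := hj
  interval_cases j <;>
    simp only [Sec, interior_Ioc, interior_Iic, mem_Ioo, mem_Iio] at hu <;>
    simp only [nu, mobDenom, inv_sqrt_two_eq_sqrt_two_div_two, Matrix.smul_apply, Matrix.of_apply,
      Matrix.cons_val_zero, Matrix.cons_val_one, smul_eq_mul, mem_Ioc] <;>
    constructor <;> nlinarith

lemma mobDenom_nu_le_inv_sqrt_two {j : ℕ} (hj : j ∈ Icc 2 5) {u : ℝ}
    (hu : u ∈ interior (Sec j)) : mobDenom (nu j) u ≤ (√2)⁻¹ := by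
  have := sqrt_two_bounds
  have h2 := Real.mul_self_sqrt (show (0:ℝ) ≤ 2 by norm_num)
  obtain ⟨hj1, hj7⟩ := hj
  interval_cases j <;>
    simp only [Sec, interior_Ioc, mem_Ioo] at hu <;>
    simp only [nu, mobDenom, inv_sqrt_two_eq_sqrt_two_div_two, Matrix.smul_apply, Matrix.of_apply,
      Matrix.cons_val_zero, Matrix.cons_val_one, smul_eq_mul] <;> nlinarith

lemma mobDenom_nu_six_lt {u : ℝ} (hu : u ∈ interior (Sec 6)) (h : 3 < mob (nu 6) u) :
    mobDenom (nu 6) u < (√2)⁻¹ := by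
  have hδ := (mobDenom_nu_mem_Ioc (by norm_num) hu).1
  have hnum : mob (nu 6) u = (mobDenom (nu 6) u + √2) / mobDenom (nu 6) u := by
    simp only [mob, mobDenom, nu, inv_sqrt_two_eq_sqrt_two_div_two, Matrix.smul_apply,
      Matrix.of_apply, Matrix.cons_val_zero, Matrix.cons_val_one, smul_eq_mul]
    ring
  rw [hnum, lt_div_iff₀ hδ] at h
  rw [inv_sqrt_two_eq_sqrt_two_div_two]
  linarith

def branchDomain (j : ℕ) : Set ℝ := interior (mob gam '' Sec j)

lemma Fm_eq_of_mem_branchDomain {j : ℕ} (hj : j ∈ Icc 1 7) {x : ℝ} (hx : x ∈ branchDomain j) :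
    Fm x = mob (nu j) (2 + 2 * √2 - x) := by
  have hu := mem_interior_image_mob_gam.1 hx
  have hlt : 2 + 2 * √2 - x < 1 + √2 := by
    simpa using interior_mono (Sec_subset_Iic hj) hu
  rw [Fm, if_neg (by linarith), mob_gam, sectorIndex_eq_of_mem_Sec hj (interior_subset hu),
    mob_mul_gam]

lemma mul_abs_sub_le_abs_Fm_sub_Fm {j : ℕ} (hj : j ∈ Icc 1 7) {x y C : ℝ}
    (hx : x ∈ branchDomain j) (hy : y ∈ branchDomain j)
    (h : C * (mobDenom (nu j) (2 + 2 * √2 - x) * mobDenom (nu j) (2 + 2 * √2 - y)) ≤ 1) :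
    C * |x - y| ≤ |Fm x - Fm y| := by
  have hδx := mobDenom_nu_mem_Ioc hj (mem_interior_image_mob_gam.1 hx)
  have hδy := mobDenom_nu_mem_Ioc hj (mem_interior_image_mob_gam.1 hy)
  rw [Fm_eq_of_mem_branchDomain hj hx, Fm_eq_of_mem_branchDomain hj hy, abs_sub_comm x,
    show y - x = 2 + 2 * √2 - x - (2 + 2 * √2 - y) by ring]
  refine mul_abs_sub_le_abs_mob_sub_mob (abs_det_nu hj) hδx.1.ne' hδy.1.ne' ?_
  rwa [abs_of_pos hδx.1, abs_of_pos hδy.1]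

lemma abs_sub_le_abs_Fm_sub_Fm {j : ℕ} (hj : j ∈ Icc 1 7) {x y : ℝ}
    (hx : x ∈ branchDomain j) (hy : y ∈ branchDomain j) : |x - y| ≤ |Fm x - Fm y| := by
  have hδx := mobDenom_nu_mem_Ioc hj (mem_interior_image_mob_gam.1 hx)
  have hδy := mobDenom_nu_mem_Ioc hj (mem_interior_image_mob_gam.1 hy)
  simpa using mul_abs_sub_le_abs_Fm_sub_Fm (C := 1) hj hx hy
    (by rw [one_mul]; exact mul_le_one₀ hδx.2 hδy.1.le hδy.2)

lemma two_mul_abs_sub_le_abs_Fm_sub_Fm {j : ℕ} (hj : j ∈ Icc 2 5) {x y : ℝ}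
    (hx : x ∈ branchDomain j) (hy : y ∈ branchDomain j) : 2 * |x - y| ≤ |Fm x - Fm y| := by
  have hj' : j ∈ Icc 1 7 := Icc_subset_Icc (by norm_num) (by norm_num) hj
  refine mul_abs_sub_le_abs_Fm_sub_Fm hj' hx hy (two_mul_mul_le_one_of_le_inv_sqrt_two
    (mobDenom_nu_mem_Ioc hj' (mem_interior_image_mob_gam.1 hx)).1.le
    (mobDenom_nu_le_inv_sqrt_two hj (mem_interior_image_mob_gam.1 hx))
    (mobDenom_nu_le_inv_sqrt_two hj (mem_interior_image_mob_gam.1 hy)))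

lemma two_mul_abs_sub_le_abs_Fm_sub_Fm_of_mem_branchDomain_six {x y : ℝ}
    (hx : x ∈ branchDomain 6) (hy : y ∈ branchDomain 6) (hfx : 3 < Fm x) (hfy : 3 < Fm y) :
    2 * |x - y| ≤ |Fm x - Fm y| := by
  have h6 : 6 ∈ Icc 1 7 := by norm_num
  rw [Fm_eq_of_mem_branchDomain h6 hx] at hfx
  rw [Fm_eq_of_mem_branchDomain h6 hy] at hfy
  refine mul_abs_sub_le_abs_Fm_sub_Fm h6 hx hy (two_mul_mul_le_one_of_le_inv_sqrt_two
    (mobDenom_nu_mem_Ioc h6 (mem_interior_image_mob_gam.1 hx)).1.le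
    (mobDenom_nu_six_lt (mem_interior_image_mob_gam.1 hx) hfx).le
    (mobDenom_nu_six_lt (mem_interior_image_mob_gam.1 hy) hfy).le)

lemma abs_sub_lt_sqrt_two_of_mem_branchDomain {j : ℕ} (hj : j ∈ Icc 1 6) {x y : ℝ}
    (hx : x ∈ branchDomain j) (hy : y ∈ branchDomain j) : |x - y| < √2 := by
  have hu := mem_interior_image_mob_gam.1 hx
  have hw := mem_interior_image_mob_gam.1 hy
  have := sqrt_two_bounds
  obtain ⟨hj1, hj6⟩ := hj
  rw [abs_sub_lt_iff]
  interval_cases j <;> simp only [Sec, interior_Ioc, mem_Ioo] at hu hw <;>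
    constructor <;> linarith

lemma three_add_two_mul_sqrt_two_lt {j : ℕ} (hj : j ∈ Icc 6 7) {x : ℝ}
    (hx : x ∈ branchDomain j) : 3 + 2 * √2 < x := by
  have hu := mem_interior_image_mob_gam.1 hx
  obtain ⟨hj6, hj7⟩ := hj
  interval_cases j <;> simp only [Sec, interior_Ioc, interior_Iic, mem_Ioo, mem_Iio] at hu <;>
    linarith [sqrt_two_bounds.1]

lemma Fm_eq_sub_of_mem_branchDomain_seven {x : ℝ} (hx : x ∈ branchDomain 7) :
    Fm x = x - (2 + 2 * √2) := by
  rw [Fm_eq_of_mem_branchDomain (by norm_num) hx]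
  simp [mob, nu]

lemma sub_mem_Ioo_of_mem_branchDomain_one {x : ℝ} (hx : x ∈ branchDomain 1) :
    x - (1 + √2) ∈ Ioo 0 √2 := by
  have hu := mem_interior_image_mob_gam.1 hx
  simp only [Sec, interior_Ioc, mem_Ioo] at hu
  constructor <;> linarith

lemma inv_Fm_sub_of_mem_branchDomain_one {x : ℝ} (hx : x ∈ branchDomain 1) :
    (Fm x - (1 + √2))⁻¹ = (x - (1 + √2))⁻¹ - (√2)⁻¹ := by
  obtain ⟨ht0, ht⟩ := sub_mem_Ioo_of_mem_branchDomain_one hx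
  have h2 := Real.mul_self_sqrt (show (0:ℝ) ≤ 2 by norm_num)
  have hFm : Fm x - (1 + √2) = √2 * (x - (1 + √2)) / (√2 - (x - (1 + √2))) := by
    rw [Fm_eq_of_mem_branchDomain (by norm_num) hx]
    simp only [mob, nu, Matrix.smul_apply, Matrix.of_apply, Matrix.cons_val_zero,
      Matrix.cons_val_one, smul_eq_mul]
    field_simp
    have hd : 2 * (1 + √2) - x + -1 ≠ 0 := by linarith
    rw [div_sub' hd, div_mul_eq_mul_div, div_eq_iff hd]
    linear_combination (x - (1 + √2) - √2) * h2
  rw [hFm, inv_div]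
  field_simp

def orbitDist (v w : ℝ) (k : ℕ) : ℝ := |Fm^[k] v - Fm^[k] w|

section Orbit

variable {s : ℕ → ℕ} {v w : ℝ}

lemma iterate_add_eq_sub_of_run_seven (hv : ∀ k, Fm^[k] v ∈ branchDomain (s k)) {k n : ℕ}
    (hrun : ∀ i < n, s (k + i) = 7) :
    Fm^[k + n] v = Fm^[k] v - n * (2 + 2 * √2) := by
  induction n with
  | zero => simp
  | succ n ih =>
    have h7 : Fm^[k + n] v ∈ branchDomain 7 := hrun n n.lt_succ_self ▸ hv (k + n)
    rw [← add_assoc, Function.iterate_succ_apply', Fm_eq_sub_of_mem_branchDomain_seven h7,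
      ih fun i hi => hrun i (hi.trans n.lt_succ_self)]
    push_cast
    ring

lemma inv_iterate_add_sub_of_run_one (hv : ∀ k, Fm^[k] v ∈ branchDomain (s k)) {k n : ℕ}
    (hrun : ∀ i < n, s (k + i) = 1) :
    (Fm^[k + n] v - (1 + √2))⁻¹ = (Fm^[k] v - (1 + √2))⁻¹ - n * (√2)⁻¹ := by
  induction n with
  | zero => simp
  | succ n ih =>
    have h1 : Fm^[k + n] v ∈ branchDomain 1 := hrun n n.lt_succ_self ▸ hv (k + n)
    rw [← add_assoc, Function.iterate_succ_apply', inv_Fm_sub_of_mem_branchDomain_one h1,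
      ih fun i hi => hrun i (hi.trans n.lt_succ_self)]
    push_cast
    ring

lemma frequently_ne_seven (hv : ∀ k, Fm^[k] v ∈ branchDomain (s k)) :
    ∃ᶠ k in atTop, s k ≠ 7 := by
  rw [frequently_atTop]
  intro K
  by_contra! h
  obtain ⟨n, hn⟩ :=
    exists_sub_nat_mul_lt (Fm^[K] v) (3 + 2 * √2) (by positivity : 0 < 2 + 2 * √2)
  rw [← iterate_add_eq_sub_of_run_seven hv fun i _ => h (K + i) (K.le_add_right i)] at hn
  have h7 : Fm^[K + n] v ∈ branchDomain 7 := h (K + n) (K.le_add_right n) ▸ hv (K + n)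
  exact hn.not_gt (three_add_two_mul_sqrt_two_lt (by norm_num) h7)

lemma exists_run_one_end (hv : ∀ k, Fm^[k] v ∈ branchDomain (s k)) (k : ℕ) :
    ∃ n, s (k + n) ≠ 1 ∧ ∀ i < n, s (k + i) = 1 := by
  have hend : ∃ n, s (k + n) ≠ 1 := by
    by_contra! h
    obtain ⟨n, hn⟩ := exists_sub_nat_mul_lt (Fm^[k] v - (1 + √2))⁻¹ 0
      (by positivity : (0 : ℝ) < (√2)⁻¹)
    rw [← inv_iterate_add_sub_of_run_one hv fun i _ => h i] at hn
    have h1 : Fm^[k + n] v ∈ branchDomain 1 := h n ▸ hv (k + n)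
    exact hn.not_ge (inv_pos.2 (sub_mem_Ioo_of_mem_branchDomain_one h1).1).le
  exact ⟨Nat.find hend, Nat.find_spec hend, fun i hi => not_not.1 (Nat.find_min hend hi)⟩

lemma monotone_orbitDist (hs : ∀ k, s k ∈ Icc 1 7) (hv : ∀ k, Fm^[k] v ∈ branchDomain (s k))
    (hw : ∀ k, Fm^[k] w ∈ branchDomain (s k)) : Monotone (orbitDist v w) :=
  monotone_nat_of_le_succ fun k => by
    simpa only [orbitDist, Function.iterate_succ_apply'] using
      abs_sub_le_abs_Fm_sub_Fm (hs k) (hv k) (hw k)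

lemma orbitDist_lt_sqrt_two (hs : ∀ k, s k ∈ Icc 1 7) (hv : ∀ k, Fm^[k] v ∈ branchDomain (s k))
    (hw : ∀ k, Fm^[k] w ∈ branchDomain (s k)) (k : ℕ) : orbitDist v w k < √2 := by
  obtain ⟨m, hkm, hm⟩ := (frequently_ne_seven hv).forall_exists_of_atTop k
  calc orbitDist v w k ≤ orbitDist v w m := monotone_orbitDist hs hv hw hkm
    _ < √2 := abs_sub_lt_sqrt_two_of_mem_branchDomain ⟨(hs m).1, by have := (hs m).2; omega⟩
      (hv m) (hw m)

lemma two_mul_orbitDist_le_succ (hv : ∀ k, Fm^[k] v ∈ branchDomain (s k))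
    (hw : ∀ k, Fm^[k] w ∈ branchDomain (s k)) {k : ℕ} (hk : s k ∈ Icc 2 5) :
    2 * orbitDist v w k ≤ orbitDist v w (k + 1) := by
  simpa only [orbitDist, Function.iterate_succ_apply'] using
    two_mul_abs_sub_le_abs_Fm_sub_Fm hk (hv k) (hw k)

/-- Along the run `|(x - (1 + √2))⁻¹ - (y - (1 + √2))⁻¹|` is constant, while the product
`(x - (1 + √2)) * (y - (1 + √2))` grows from below `2` to above `4`. -/
lemma two_mul_orbitDist_le_of_run_one (hv : ∀ k, Fm^[k] v ∈ branchDomain (s k))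
    (hw : ∀ k, Fm^[k] w ∈ branchDomain (s k)) {k n : ℕ} (hk : s k = 1)
    (hrun : ∀ i < n, s (k + i) = 1) (hend : s (k + n) ∈ Icc 6 7) :
    2 * orbitDist v w k ≤ orbitDist v w (k + n) := by
  obtain ⟨ha0, ha⟩ := sub_mem_Ioo_of_mem_branchDomain_one (hk ▸ hv k)
  obtain ⟨hb0, hb⟩ := sub_mem_Ioo_of_mem_branchDomain_one (hk ▸ hw k)
  have ha' := three_add_two_mul_sqrt_two_lt hend (hv (k + n))
  have hb' := three_add_two_mul_sqrt_two_lt hend (hw (k + n))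
  have h2 := Real.mul_self_sqrt (show (0:ℝ) ≤ 2 by norm_num)
  have hr := Real.sqrt_nonneg 2
  have hinv : (Fm^[k + n] v - (1 + √2))⁻¹ - (Fm^[k + n] w - (1 + √2))⁻¹
      = (Fm^[k] v - (1 + √2))⁻¹ - (Fm^[k] w - (1 + √2))⁻¹ := by
    rw [inv_iterate_add_sub_of_run_one hv hrun, inv_iterate_add_sub_of_run_one hw hrun]
    ring
  have hab : (Fm^[k] v - (1 + √2)) * (Fm^[k] w - (1 + √2)) ≤ 2 :=
    (mul_le_mul ha.le hb.le hb0.le hr).trans h2.le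
  have hab' : 4 ≤ (Fm^[k + n] v - (1 + √2)) * (Fm^[k + n] w - (1 + √2)) := by
    nlinarith
  have hd : ∀ j, 0 < Fm^[j] v - (1 + √2) → 0 < Fm^[j] w - (1 + √2) →
      orbitDist v w j = |(Fm^[j] v - (1 + √2))⁻¹ - (Fm^[j] w - (1 + √2))⁻¹| *
        ((Fm^[j] v - (1 + √2)) * (Fm^[j] w - (1 + √2))) := fun j ha hb => by
    rw [orbitDist, ← abs_sub_eq_abs_inv_sub_inv_mul ha hb, sub_sub_sub_cancel_right]
  rw [hd k ha0 hb0, hd (k + n) (by linarith) (by linarith), hinv]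
  nlinarith [abs_nonneg ((Fm^[k] v - (1 + √2))⁻¹ - (Fm^[k] w - (1 + √2))⁻¹)]

lemma exists_two_mul_orbitDist_le_of_le_five (hs : ∀ k, s k ∈ Icc 1 7)
    (hv : ∀ k, Fm^[k] v ∈ branchDomain (s k)) (hw : ∀ k, Fm^[k] w ∈ branchDomain (s k))
    {k : ℕ} (hk : s k ≤ 5) : ∃ m, 2 * orbitDist v w k ≤ orbitDist v w m := by
  rcases (show s k = 1 ∨ s k ∈ Icc 2 5 by have := (hs k).1; simp only [mem_Icc]; omega)
    with hk1 | hk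
  · obtain ⟨n, hn, hrun⟩ := exists_run_one_end hv k
    rcases (show s (k + n) ∈ Icc 2 5 ∨ s (k + n) ∈ Icc 6 7 by
        have := hs (k + n); simp only [mem_Icc] at this ⊢; omega) with hend | hend
    · refine ⟨k + n + 1, ?_⟩
      linarith [monotone_orbitDist hs hv hw (k.le_add_right n),
        two_mul_orbitDist_le_succ hv hw hend]
    · exact ⟨k + n, two_mul_orbitDist_le_of_run_one hv hw hk1 hrun hend⟩
  · exact ⟨k + 1, two_mul_orbitDist_le_succ hv hw hk⟩

lemma exists_two_mul_orbitDist_le_of_ne_seven (hs : ∀ k, s k ∈ Icc 1 7)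
    (hv : ∀ k, Fm^[k] v ∈ branchDomain (s k)) (hw : ∀ k, Fm^[k] w ∈ branchDomain (s k))
    {k : ℕ} (hk : s k ≠ 7) : ∃ m, 2 * orbitDist v w k ≤ orbitDist v w m := by
  rcases (show s k ≤ 5 ∨ s k = 6 by have := (hs k).2; omega) with hk | hk
  · exact exists_two_mul_orbitDist_le_of_le_five hs hv hw hk
  rcases (show s (k + 1) ≤ 5 ∨ s (k + 1) ∈ Icc 6 7 by
      have := (hs (k + 1)).2; simp only [mem_Icc]; omega) with hnext | hnext
  · obtain ⟨m, hm⟩ := exists_two_mul_orbitDist_le_of_le_five hs hv hw hnext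
    exact ⟨m, by linarith [monotone_orbitDist hs hv hw k.le_succ]⟩
  · have h3 : ∀ x, Fm^[k + 1] x ∈ branchDomain (s (k + 1)) → 3 < Fm (Fm^[k] x) := fun x hx => by
      rw [← Function.iterate_succ_apply' Fm k x]
      linarith [three_add_two_mul_sqrt_two_lt hnext hx, Real.sqrt_nonneg 2]
    refine ⟨k + 1, ?_⟩
    simpa only [orbitDist, Function.iterate_succ_apply'] using
      two_mul_abs_sub_le_abs_Fm_sub_Fm_of_mem_branchDomain_six (hk ▸ hv k) (hk ▸ hw k)
        (h3 v (hv (k + 1))) (h3 w (hw (k + 1)))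

lemma exists_two_mul_orbitDist_le (hs : ∀ k, s k ∈ Icc 1 7)
    (hv : ∀ k, Fm^[k] v ∈ branchDomain (s k)) (hw : ∀ k, Fm^[k] w ∈ branchDomain (s k))
    (k : ℕ) : ∃ m, 2 * orbitDist v w k ≤ orbitDist v w m := by
  obtain ⟨j, hkj, hj⟩ := (frequently_ne_seven hv).forall_exists_of_atTop k
  obtain ⟨m, hm⟩ := exists_two_mul_orbitDist_le_of_ne_seven hs hv hw hj
  exact ⟨m, by linarith [monotone_orbitDist hs hv hw hkj]⟩

end Orbit

theorem backwardCF_unique_point_general (v v' : ℝ)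
    (s : ℕ → ℕ) (hs : ∀ k, 1 ≤ s k ∧ s k ≤ 7)
    (h1 : ∀ k, Fm^[k] v ∈ interior (mob gam '' Sec (s k)))
    (h2 : ∀ k, Fm^[k] v' ∈ interior (mob gam '' Sec (s k))) :
    v = v' := by
  have hdist := nonpos_of_forall_exists_two_mul_le
    (fun k => (orbitDist_lt_sqrt_two hs h1 h2 k).le) (exists_two_mul_orbitDist_le hs h1 h2) 0
  simpa [orbitDist, sub_eq_zero] using hdist

/-- The backward octagon additive continued fraction expansion determines a unique point:
if the orbits of `v, v' ∈ Σ₀` under `F⁻` visit the interiors of the same intervals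
`γ[Σ_{s(k)}]` at every step, then `v = v'`. -/
theorem backwardCF_unique_point (v v' : ℝ)
    (hv : v ∈ Set.Ioi (1 + Real.sqrt 2)) (hv' : v' ∈ Set.Ioi (1 + Real.sqrt 2))
    (s : ℕ → ℕ) (hs : ∀ k, 1 ≤ s k ∧ s k ≤ 7)
    (h1 : ∀ k, Fm^[k] v ∈ interior (mob gam '' Sec (s k)))
    (h2 : ∀ k, Fm^[k] v' ∈ interior (mob gam '' Sec (s k))) :
    v = v' :=
  backwardCF_unique_point_general v v' s hs h1 h2
end
end

section
/- Orbits of the octagon Farey map escape the parabolic sectors: for every u ∈ (1, 1+√2) there exists n ≥ 1 with Fⁿ(u) ∉ Σ₁, and for every u ∈ (-∞, -1-√2] there exists n ≥ 1 with Fⁿ(u) ∉ Σ₇. Consequently the first-exit times n₁ and n₇ used to define the octagon Gauss map are finite everywhere except at the parabolic fixed point u = 1+√2. -/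
open MeasureTheory Set

noncomputable section

/-! On `Σ₇` the map `F` is the translation `u ↦ u + 2 + 2√2`. On `Σ₁` it is parabolic with
fixed point `1 + √2`, and in the coordinate `(1 + √2 - u)⁻¹` it becomes the translation by
`-1/√2`. In both cases a positive quantity drops by a fixed amount at every step the orbit
stays in the sector, so the orbit must leave it. -/

theorem exists_iterate_notMem_of_potential {α : Type*} {f : α → α} {S T : Set α}
    {φ : α → ℝ} {c δ : ℝ} (hδ : 0 < δ) (hφ : ∀ x ∈ S, c ≤ φ x)
    (hstep : ∀ x ∈ S, f x ∈ T → f x ∈ S ∧ φ (f x) + δ ≤ φ x) {x : α} (hx : x ∈ S) :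
    ∃ n, 1 ≤ n ∧ f^[n] x ∉ T := by
  by_contra! hT
  have orbit : ∀ n : ℕ, f^[n] x ∈ S ∧ φ (f^[n] x) + n * δ ≤ φ x := by
    intro n
    induction n with
    | zero => simpa using hx
    | succ n ih =>
      have hfT : f (f^[n] x) ∈ T := by
        simpa only [Function.iterate_succ_apply'] using hT (n + 1) (Nat.le_add_left 1 n)
      obtain ⟨hS, hdec⟩ := hstep _ ih.1 hfT
      rw [Function.iterate_succ_apply']
      exact ⟨hS, by push_cast; linarith [ih.2]⟩
  obtain ⟨n, hn⟩ := exists_nat_gt ((φ x - c) / δ)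
  rw [div_lt_iff₀ hδ] at hn
  linarith [orbit n, hφ _ (orbit n).1]

theorem mob_smul (M : Matrix (Fin 2) (Fin 2) ℝ) {c : ℝ} (hc : c ≠ 0) (u : ℝ) :
    mob (c • M) u = mob M u := by
  simp only [mob, Matrix.smul_apply, smul_eq_mul, mul_assoc, ← mul_add]
  exact mul_div_mul_left _ _ hc

theorem one_lt_sqrt_two : (1 : ℝ) < √2 := by
  simpa using Real.sqrt_lt_sqrt zero_le_one one_lt_two

theorem sectorIndex_eq_one {u : ℝ} (hu : u ∈ Ioc 1 (1 + √2)) : sectorIndex u = 1 := by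
  simp [sectorIndex, not_lt.2 hu.2, hu.1]

theorem sectorIndex_eq_seven {u : ℝ} (hu : u ≤ -(1 + √2)) : sectorIndex u = 7 := by
  have := one_lt_sqrt_two
  simp only [sectorIndex]
  repeat rw [if_neg (by linarith)]

theorem gam_mul_nu_one :
    gam * nu 1 = (√2)⁻¹ • !![1 + 2 * √2, -(3 + 2 * √2); 1, -1] := by
  ext i j
  fin_cases i <;> fin_cases j <;>
    simp [gam, nu, Matrix.mul_apply, Fin.sum_univ_two] <;> ring

theorem F_of_mem_sector_one {u : ℝ} (hu : u ∈ Ioc 1 (1 + √2)) :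
    F u = ((1 + 2 * √2) * u - (3 + 2 * √2)) / (u - 1) := by
  rw [F, sectorIndex_eq_one hu, if_neg one_ne_zero, gam_mul_nu_one,
    mob_smul _ (inv_ne_zero (Real.sqrt_ne_zero'.2 two_pos))]
  simp [mob, sub_eq_add_neg]

theorem F_of_mem_sector_seven {u : ℝ} (hu : u ≤ -(1 + √2)) : F u = u + (2 + 2 * √2) := by
  rw [F, sectorIndex_eq_seven hu]
  simp [mob, gam, nu, Matrix.mul_apply, Fin.sum_univ_two]

theorem sub_F_of_mem_sector_one {u : ℝ} (hu : u ∈ Ioc 1 (1 + √2)) :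
    1 + √2 - F u = √2 * (1 + √2 - u) / (u - 1) := by
  have hu1 : u - 1 ≠ 0 := sub_ne_zero.2 hu.1.ne'
  rw [F_of_mem_sector_one hu, eq_div_iff hu1, sub_mul, div_mul_cancel₀ _ hu1]
  linear_combination -Real.sq_sqrt zero_le_two

theorem F_lt_of_mem_sector_one {u : ℝ} (hu : u ∈ Ioo 1 (1 + √2)) : F u < 1 + √2 := by
  have hpos : 0 < √2 * (1 + √2 - u) / (u - 1) :=
    div_pos (mul_pos (by positivity) (by linarith [hu.2])) (by linarith [hu.1])
  linarith [sub_F_of_mem_sector_one (Ioo_subset_Ioc_self hu)]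

theorem inv_sub_F_of_mem_sector_one {u : ℝ} (hu : u ∈ Ioo 1 (1 + √2)) :
    (1 + √2 - F u)⁻¹ = (1 + √2 - u)⁻¹ - (√2)⁻¹ := by
  have hs : √2 ≠ 0 := Real.sqrt_ne_zero'.2 two_pos
  have hp : 1 + √2 - u ≠ 0 := by linarith [hu.2]
  rw [sub_F_of_mem_sector_one (Ioo_subset_Ioc_self hu), inv_div]
  field_simp
  ring

/-- Orbits of the octagon Farey map escape the parabolic sectors: every
`u ∈ (1, 1+√2)` eventually leaves `Σ₁ = (1, 1+√2]`, and every `u ∈ (-∞, -1-√2]`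
eventually leaves `Σ₇ = (-∞, -1-√2]`. -/
theorem farey_escapes_parabolic_sectors :
    (∀ u ∈ Set.Ioo (1 : ℝ) (1 + Real.sqrt 2),
      ∃ n, 1 ≤ n ∧ F^[n] u ∉ Set.Ioc (1 : ℝ) (1 + Real.sqrt 2)) ∧
    (∀ u ∈ Set.Iic (-(1 + Real.sqrt 2)),
      ∃ n, 1 ≤ n ∧ F^[n] u ∉ Set.Iic (-(1 + Real.sqrt 2))) := by
  have hs : 0 < √2 := by positivity
  constructor
  · refine fun u hu ↦ exists_iterate_notMem_of_potential (φ := fun v ↦ (1 + √2 - v)⁻¹)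
      (c := 0) (inv_pos.2 hs) (fun v hv ↦ (inv_pos.2 (by linarith [hv.2])).le) ?_ hu
    intro v hv hFv
    refine ⟨⟨hFv.1, F_lt_of_mem_sector_one hv⟩, ?_⟩
    rw [inv_sub_F_of_mem_sector_one hv]
    linarith
  · refine fun u hu ↦ exists_iterate_notMem_of_potential (φ := Neg.neg) (c := 1 + √2)
      (δ := 2 + 2 * √2) (by positivity) (fun v hv ↦ le_neg.2 hv) ?_ hu
    intro v hv hFv
    refine ⟨hFv, ?_⟩
    rw [F_of_mem_sector_seven hv]
    linarith
end
end
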